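/- Let f, g : ℝ^p × ℝ^q → ℝ be twice continuously differentiable, let α ∈ ℝ, D ∈ ℕ with D ≥ 1, and fix y⁰ ∈ ℝ^q. Define maps y^t : ℝ^p → ℝ^q recursively by y^0(x) = y⁰ and y^t(x) = y^{t−1}(x) − α ∇_y g(x, y^{t−1}(x)) for t = 1, …, D. Then the function x ↦ f(x, y^D(x)) is differentiable on ℝ^p, and its gradient equals ∇_x f(x, y^D(x)) − α Σ_{t=0}^{D−1} ∇_x∇_y g(x, y^t(x)) [ ∏_{j=t+1}^{D−1} ( I − α ∇²_y g(x, y^j(x)) ) ] ∇_y f(x, y^D(x)), where the matrix product is ordered with increasing j from left to right and the empty product (t = D−1) is the identity. -/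

import Mathlib

open scoped RealInnerProductSpace

noncomputable section

abbrev Euc (n : ℕ) : Type := EuclideanSpace ℝ (Fin n)

variable {p q : ℕ}

/-- The partial gradient `∇ₓ f(x,y)`. -/
noncomputable def gradX (f : Euc p × Euc q → ℝ) (x : Euc p) (y : Euc q) : Euc p :=
  gradient (fun x' => f (x', y)) x

/-- The partial gradient `∇_y f(x,y)`. -/
noncomputable def gradY (f : Euc p × Euc q → ℝ) (x : Euc p) (y : Euc q) : Euc q :=
  gradient (fun y' => f (x, y')) y

/-- The Hessian `∇²_y g(x,y)` of `y ↦ g(x,y)`, as a continuous linear map. -/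
noncomputable def hessY (g : Euc p × Euc q → ℝ) (x : Euc p) (y : Euc q) :
    Euc q →L[ℝ] Euc q :=
  fderiv ℝ (fun y' => gradY g x y') y

/-- The Fréchet derivative in `x` of `x ↦ ∇_y g(x,y)`; the paper's mixed second
derivative matrix `∇ₓ∇_y g(x,y)` is its adjoint. -/
noncomputable def mixXY (g : Euc p × Euc q → ℝ) (x : Euc p) (y : Euc q) :
    Euc p →L[ℝ] Euc q :=
  fderiv ℝ (fun x' => gradY g x' y) x

/-! By the chain rule, the Jacobians `J t` of the iterates `x ↦ y^t(x)` satisfy the linear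
recurrence `J 0 = 0`, `J (t+1) = (I - α ∇²_y g) ∘ J t - α ∂ₓ∇_y g`, and the gradient of
`x ↦ f(x, y^D(x))` is `∇ₓ f + (J D)† ∇_y f`. Unrolling the recurrence and taking adjoints
reverses the order of the factors; since the Hessians are self-adjoint this is the stated sum. -/

open ContinuousLinearMap InnerProductSpace

section PartialDerivatives

variable {𝕜 E F G : Type*} [NontriviallyNormedField 𝕜]
  [NormedAddCommGroup E] [NormedSpace 𝕜 E] [NormedAddCommGroup F] [NormedSpace 𝕜 F]
  [NormedAddCommGroup G] [NormedSpace 𝕜 G] {Ψ : E × F → G} {x : E} {y : F}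

theorem DifferentiableAt.hasFDerivAt_comp_prodMk_left (hΨ : DifferentiableAt 𝕜 Ψ (x, y)) :
    HasFDerivAt (fun x' => Ψ (x', y)) ((fderiv 𝕜 Ψ (x, y)).comp (inl 𝕜 E F)) x :=
  hΨ.hasFDerivAt.comp x (hasFDerivAt_prodMk_left x y)

theorem DifferentiableAt.hasFDerivAt_comp_prodMk_right (hΨ : DifferentiableAt 𝕜 Ψ (x, y)) :
    HasFDerivAt (fun y' => Ψ (x, y')) ((fderiv 𝕜 Ψ (x, y)).comp (inr 𝕜 E F)) y :=
  hΨ.hasFDerivAt.comp y (hasFDerivAt_prodMk_right x y)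

theorem DifferentiableAt.hasFDerivAt_comp_graph {φ : E → F} {φ' : E →L[𝕜] F}
    (hΨ : DifferentiableAt 𝕜 Ψ (x, φ x)) (hφ : HasFDerivAt φ φ' x) :
    HasFDerivAt (fun x' => Ψ (x', φ x'))
      ((fderiv 𝕜 Ψ (x, φ x)).comp (inl 𝕜 E F) + ((fderiv 𝕜 Ψ (x, φ x)).comp (inr 𝕜 E F)).comp φ')
      x := by
  have hsplit : (fderiv 𝕜 Ψ (x, φ x)).comp ((ContinuousLinearMap.id 𝕜 E).prod φ') =
      (fderiv 𝕜 Ψ (x, φ x)).comp (inl 𝕜 E F) +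
        ((fderiv 𝕜 Ψ (x, φ x)).comp (inr 𝕜 E F)).comp φ' := by
    ext v
    simp [← map_add]
  exact hsplit ▸ hΨ.hasFDerivAt.comp x ((hasFDerivAt_id x).prodMk hφ)

end PartialDerivatives

section Adjoint

variable {E F : Type*} [NormedAddCommGroup E] [InnerProductSpace ℝ E] [CompleteSpace E]
  [NormedAddCommGroup F] [InnerProductSpace ℝ F] [CompleteSpace F]

theorem adjoint_eq_sum_of_recurrence (A : ℕ → F →L[ℝ] F) (hA : ∀ t, IsSelfAdjoint (A t))
    (B Φ : ℕ → E →L[ℝ] F) (h0 : Φ 0 = 0) (hrec : ∀ t, Φ (t + 1) = (A t).comp (Φ t) + B t)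
    (T : ℕ) :
    adjoint (Φ T) = ∑ t ∈ Finset.range T,
      (adjoint (B t)).comp (((List.range (T - 1 - t)).map fun i => A (t + 1 + i)).prod) := by
  induction T with
  | zero => simp [h0]
  | succ T ih =>
    have hprod : ∀ t < T, ((List.range (T - t)).map fun i => A (t + 1 + i)).prod =
        ((List.range (T - 1 - t)).map fun i => A (t + 1 + i)).prod * A T := fun t ht => by
      rw [show T - t = T - 1 - t + 1 by omega, List.range_succ, List.map_append,
        List.prod_append, List.map_singleton, List.prod_singleton,
        show t + 1 + (T - 1 - t) = T by omega]
    rw [hrec, map_add, adjoint_comp, ← star_eq_adjoint (A T), (hA T).star_eq, ih,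
      finsetSum_comp, Finset.sum_range_succ, Nat.add_sub_cancel, Nat.sub_self]
    congr 1
    · refine Finset.sum_congr rfl fun t ht => ?_
      rw [hprod t (Finset.mem_range.mp ht), mul_def, comp_assoc]

end Adjoint


theorem gradX_eq_toDual_symm {f : Euc p × Euc q → ℝ} {x : Euc p} {y : Euc q}
    (hf : DifferentiableAt ℝ f (x, y)) :
    gradX f x y = (toDual ℝ (Euc p)).symm ((fderiv ℝ f (x, y)).comp (inl ℝ (Euc p) (Euc q))) := by
  rw [gradX, gradient, hf.hasFDerivAt_comp_prodMk_left.fderiv]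

theorem gradY_eq_toDual_symm {f : Euc p × Euc q → ℝ} {x : Euc p} {y : Euc q}
    (hf : DifferentiableAt ℝ f (x, y)) :
    gradY f x y = (toDual ℝ (Euc q)).symm ((fderiv ℝ f (x, y)).comp (inr ℝ (Euc p) (Euc q))) := by
  rw [gradY, gradient, hf.hasFDerivAt_comp_prodMk_right.fderiv]

theorem hasGradientAt_comp_graph {f : Euc p × Euc q → ℝ} {x : Euc p} {φ : Euc p → Euc q}
    {φ' : Euc p →L[ℝ] Euc q} (hf : DifferentiableAt ℝ f (x, φ x)) (hφ : HasFDerivAt φ φ' x) :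
    HasGradientAt (fun x' => f (x', φ x')) (gradX f x (φ x) + adjoint φ' (gradY f x (φ x))) x := by
  convert (hf.hasFDerivAt_comp_graph hφ).hasGradientAt using 1
  refine ext_inner_right ℝ fun v => ?_
  rw [inner_add_left, adjoint_inner_left, gradX_eq_toDual_symm hf, gradY_eq_toDual_symm hf]
  simp [inner_add_left]

theorem contDiff_uncurry_gradY {g : Euc p × Euc q → ℝ} (hg : ContDiff ℝ 2 g) :
    ContDiff ℝ 1 (Function.uncurry (gradY g)) := by
  have hdual : Function.uncurry (gradY g) =
      fun z => (toDual ℝ (Euc q)).symm ((fderiv ℝ g z).comp (inr ℝ (Euc p) (Euc q))) :=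
    funext fun z => gradY_eq_toDual_symm ((hg.differentiable two_ne_zero) z)
  rw [hdual]
  exact (toDual ℝ (Euc q)).symm.contDiff.comp
    (((compL ℝ (Euc q) (Euc p × Euc q) ℝ).flip (inr ℝ (Euc p) (Euc q))).contDiff.comp
      (hg.fderiv_right one_add_one_eq_two.le))

theorem mixXY_eq_fderiv_comp_inl {g : Euc p × Euc q → ℝ} (hg : ContDiff ℝ 2 g) (x : Euc p)
    (y : Euc q) :
    mixXY g x y = (fderiv ℝ (Function.uncurry (gradY g)) (x, y)).comp (inl ℝ (Euc p) (Euc q)) :=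
  (((contDiff_uncurry_gradY hg).differentiable one_ne_zero)
    (x, y)).hasFDerivAt_comp_prodMk_left.fderiv

theorem hessY_eq_fderiv_comp_inr {g : Euc p × Euc q → ℝ} (hg : ContDiff ℝ 2 g) (x : Euc p)
    (y : Euc q) :
    hessY g x y = (fderiv ℝ (Function.uncurry (gradY g)) (x, y)).comp (inr ℝ (Euc p) (Euc q)) :=
  (((contDiff_uncurry_gradY hg).differentiable one_ne_zero)
    (x, y)).hasFDerivAt_comp_prodMk_right.fderiv

theorem isSelfAdjoint_hessY {g : Euc p × Euc q → ℝ} (hg : ContDiff ℝ 2 g) (x : Euc p)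
    (y : Euc q) : IsSelfAdjoint (hessY g x y) := by
  set gx : Euc q → ℝ := fun y' => g (x, y')
  have hgx : ContDiff ℝ 2 gx := hg.comp (contDiff_const.prodMk contDiff_id)
  have hhess : ∀ w, hessY g x y w = (toDual ℝ (Euc q)).symm (fderiv ℝ (fderiv ℝ gx) y w) := by
    intro w
    change fderiv ℝ ((toDual ℝ (Euc q)).symm ∘ fderiv ℝ gx) y w = _
    rw [LinearIsometryEquiv.comp_fderiv]
    rfl
  rw [isSelfAdjoint_iff_isSymmetric]
  intro u v
  rw [coe_coe, hhess u, hhess v, toDual_symm_apply, real_inner_comm, toDual_symm_apply]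
  exact (hgx.contDiffAt.isSymmSndFDerivAt (by simp)).eq u v

def itdJacobian (g : Euc p × Euc q → ℝ) (α : ℝ) (ypath : ℕ → Euc p → Euc q) (x : Euc p) :
    ℕ → (Euc p →L[ℝ] Euc q)
  | 0 => 0
  | t + 1 => ((1 : Euc q →L[ℝ] Euc q) - α • hessY g x (ypath t x)).comp (itdJacobian g α ypath x t)
      - α • mixXY g x (ypath t x)

theorem hasFDerivAt_itdJacobian {g : Euc p × Euc q → ℝ} (hg : ContDiff ℝ 2 g) {α : ℝ} {D : ℕ}
    {y0 : Euc q} {ypath : ℕ → Euc p → Euc q} (h0 : ∀ x, ypath 0 x = y0)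
    (hrec : ∀ t, t < D → ∀ x, ypath (t + 1) x = ypath t x - α • gradY g x (ypath t x))
    {t : ℕ} (ht : t ≤ D) (x : Euc p) : HasFDerivAt (ypath t) (itdJacobian g α ypath x t) x := by
  induction t with
  | zero => simpa [funext h0, itdJacobian] using hasFDerivAt_const y0 x
  | succ t ih =>
    have hstep : ypath (t + 1) =
        fun x' => ypath t x' - α • Function.uncurry (gradY g) (x', ypath t x') :=
      funext (hrec t ht)
    have hgrad := ((contDiff_uncurry_gradY hg).differentiable one_ne_zero
      (x, ypath t x)).hasFDerivAt_comp_graph (ih (by omega))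
    rw [← mixXY_eq_fderiv_comp_inl hg, ← hessY_eq_fderiv_comp_inr hg] at hgrad
    have hJ : itdJacobian g α ypath x (t + 1) = itdJacobian g α ypath x t -
        α • (mixXY g x (ypath t x) + (hessY g x (ypath t x)).comp (itdJacobian g α ypath x t)) := by
      rw [itdJacobian, sub_comp, smul_comp, one_def, id_comp, smul_add]
      abel
    rw [hstep, hJ]
    exact (ih (by omega)).sub (hgrad.const_smul α)

theorem adjoint_itdJacobian {g : Euc p × Euc q → ℝ} (hg : ContDiff ℝ 2 g) (α : ℝ)
    (ypath : ℕ → Euc p → Euc q) (x : Euc p) (T : ℕ) :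
    adjoint (itdJacobian g α ypath x T) = -α • ∑ t ∈ Finset.range T,
      (adjoint (mixXY g x (ypath t x))).comp (((List.range (T - 1 - t)).map fun i =>
        (1 : Euc q →L[ℝ] Euc q) - α • hessY g x (ypath (t + 1 + i) x)).prod) := by
  rw [adjoint_eq_sum_of_recurrence (fun t => 1 - α • hessY g x (ypath t x))
    (fun t => (IsSelfAdjoint.one _).sub ((IsSelfAdjoint.all α).smul (isSelfAdjoint_hessY hg x _)))
    (fun t => -(α • mixXY g x (ypath t x))) _ rfl (fun t => sub_eq_add_neg _ _) T,
    Finset.smul_sum]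
  refine Finset.sum_congr rfl fun t _ => ?_
  rw [map_neg, map_smulₛₗ, neg_comp, smul_comp, neg_smul]
  rfl

theorem itd_gradient_form_general (p q : ℕ) (f g : Euc p × Euc q → ℝ)
    (hf : ContDiff ℝ 2 f) (hg : ContDiff ℝ 2 g)
    (α : ℝ) (D : ℕ) (y0 : Euc q)
    (ypath : ℕ → Euc p → Euc q)
    (h0 : ∀ x, ypath 0 x = y0)
    (hrec : ∀ t, t < D → ∀ x, ypath (t + 1) x = ypath t x - α • gradY g x (ypath t x)) :
    Differentiable ℝ (fun x => f (x, ypath D x)) ∧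
    ∀ x : Euc p, gradient (fun x' => f (x', ypath D x')) x =
      gradX f x (ypath D x) -
        α • ∑ t ∈ Finset.range D,
          (ContinuousLinearMap.adjoint (mixXY g x (ypath t x)))
            ((((List.range (D - 1 - t)).map (fun i =>
                (1 : Euc q →L[ℝ] Euc q) - α • hessY g x (ypath (t + 1 + i) x))).prod)
              (gradY f x (ypath D x))) := by
  have hgrad : ∀ x, HasGradientAt (fun x' => f (x', ypath D x'))
      (gradX f x (ypath D x) + adjoint (itdJacobian g α ypath x D) (gradY f x (ypath D x))) x :=
    fun x => hasGradientAt_comp_graph (hf.differentiable two_ne_zero _)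
      (hasFDerivAt_itdJacobian hg h0 hrec le_rfl x)
  refine ⟨fun x => (hgrad x).differentiableAt, fun x => (hgrad x).gradient.trans ?_⟩
  rw [adjoint_itdJacobian hg, smul_apply, sum_apply, neg_smul, ← sub_eq_add_neg]
  rfl

/-- Proposition 2.2: the ITD gradient form.  If `y^t(x)` are the
inner gradient-descent iterates starting from a fixed `y⁰`, then `x ↦ f(x, y^D(x))` is
differentiable and its gradient equals
`∇ₓ f(x,y^D(x)) − α Σ_{t<D} ∇ₓ∇_y g(x,y^t(x)) ∏_{j=t+1}^{D-1} (I − α ∇²_y g(x,y^j(x))) ∇_y f(x,y^D(x))`. -/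
theorem itd_gradient_form (p q : ℕ) (f g : Euc p × Euc q → ℝ)
    (hf : ContDiff ℝ 2 f) (hg : ContDiff ℝ 2 g)
    (α : ℝ) (D : ℕ) (hD : 1 ≤ D) (y0 : Euc q)
    (ypath : ℕ → Euc p → Euc q)
    (h0 : ∀ x, ypath 0 x = y0)
    (hrec : ∀ t, t < D → ∀ x, ypath (t + 1) x = ypath t x - α • gradY g x (ypath t x)) :
    Differentiable ℝ (fun x => f (x, ypath D x)) ∧
    ∀ x : Euc p, gradient (fun x' => f (x', ypath D x')) x =
      gradX f x (ypath D x) -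
        α • ∑ t ∈ Finset.range D,
          (ContinuousLinearMap.adjoint (mixXY g x (ypath t x)))
            ((((List.range (D - 1 - t)).map (fun i =>
                (1 : Euc q →L[ℝ] Euc q) - α • hessY g x (ypath (t + 1 + i) x))).prod)
              (gradY f x (ypath D x))) :=
  itd_gradient_form_general p q f g hf hg α D y0 ypath h0 hrec
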